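/- arXiv:2405.16068 — 12 statements merged into one kernel-verified Lean document; each statement's English description precedes it below -/
import Mathlib

section
/- A positive integer n belongs to S if and only if n ≥ 2 and n is not divisible by 5; that is, S = {n ∈ ℕ : n ≥ 2 and 5 ∤ n}. -/
/-- The smallest set `S` of positive integers such that `2 ∈ S`,
`n ∈ S` whenever `n² ∈ S`, and `(n+5)² ∈ S` whenever `n ∈ S`. -/
inductive PutnamS : ℕ → Prop
  | base : PutnamS 2
  | down (n : ℕ) : PutnamS (n ^ 2) → PutnamS n
  | up (n : ℕ) : PutnamS n → PutnamS ((n + 5) ^ 2)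

lemma putnamS_step5 {n : ℕ} (h : PutnamS n) : PutnamS (n + 5) :=
  PutnamS.down _ (PutnamS.up _ h)

lemma putnamS_add5mul {n : ℕ} (h : PutnamS n) (k : ℕ) : PutnamS (n + 5 * k) := by
  induction k with
  | zero => simpa using h
  | succ k ih =>
    have h2 : n + 5 * (k + 1) = n + 5 * k + 5 := by ring
    rw [h2]
    exact putnamS_step5 ih

lemma putnamS_49 : PutnamS 49 := by
  have := PutnamS.up 2 PutnamS.base
  norm_num at this
  exact this

lemma putnamS_2916 : PutnamS 2916 := by
  have := PutnamS.up 49 putnamS_49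
  norm_num at this
  exact this

lemma putnamS_4 : PutnamS 4 := by
  have h : PutnamS 65536 := by
    have := putnamS_add5mul putnamS_2916 12524
    norm_num at this
    exact this
  have h2 : PutnamS 256 := PutnamS.down 256 (by norm_num; exact h)
  have h3 : PutnamS 16 := PutnamS.down 16 (by norm_num; exact h2)
  exact PutnamS.down 4 (by norm_num; exact h3)

lemma putnamS_3 : PutnamS 3 := by
  have h : PutnamS 6561 := by
    have := putnamS_add5mul putnamS_2916 729
    norm_num at this
    exact this
  have h2 : PutnamS 81 := PutnamS.down 81 (by norm_num; exact h)
  have h3 : PutnamS 9 := PutnamS.down 9 (by norm_num; exact h2)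
  exact PutnamS.down 3 (by norm_num; exact h3)

lemma putnamS_6 : PutnamS 6 := by
  have h : PutnamS 1679616 := by
    have := putnamS_add5mul putnamS_2916 335340
    norm_num at this
    exact this
  have h2 : PutnamS 1296 := PutnamS.down 1296 (by norm_num; exact h)
  have h3 : PutnamS 36 := PutnamS.down 36 (by norm_num; exact h2)
  exact PutnamS.down 6 (by norm_num; exact h3)

/-- A positive integer `n` belongs to `S` if and only if `n ≥ 2` and `5 ∤ n`. -/
theorem putnamS_iff (n : ℕ) (hn : 0 < n) :
    PutnamS n ↔ 2 ≤ n ∧ ¬ (5 ∣ n) := by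
  constructor
  · intro h
    clear hn
    induction h with
    | base => norm_num
    | down m hm ih =>
      obtain ⟨h1, h2⟩ := ih
      constructor
      · by_contra hlt
        push_neg at hlt
        interval_cases m <;> simp_all
      · intro hd
        exact h2 (Dvd.dvd.pow hd (by norm_num))
    | up m hm ih =>
      obtain ⟨h1, h2⟩ := ih
      constructor
      · nlinarith
      · intro hd
        have h5 : Nat.Prime 5 := by norm_num
        have : (5 : ℕ) ∣ m + 5 := h5.dvd_of_dvd_pow hd
        exact h2 (by omega)
  · rintro ⟨h1, h2⟩
    have hr : n % 5 = 1 ∨ n % 5 = 2 ∨ n % 5 = 3 ∨ n % 5 = 4 := by omega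
    rcases hr with h | h | h | h
    · have hk : n = 6 + 5 * ((n - 6) / 5) := by omega
      rw [hk]; exact putnamS_add5mul putnamS_6 _
    · have hk : n = 2 + 5 * ((n - 2) / 5) := by omega
      rw [hk]; exact putnamS_add5mul PutnamS.base _
    · have hk : n = 3 + 5 * ((n - 3) / 5) := by omega
      rw [hk]; exact putnamS_add5mul putnamS_3 _
    · have hk : n = 4 + 5 * ((n - 4) / 5) := by omega
      rw [hk]; exact putnamS_add5mul putnamS_4 _
end

section
/- The graph Γ₅ is connected in the directed sense: for all integers x, y ≥ 2 with 5 ∤ x and 5 ∤ y, there exists a path in Γ₅ from x to y. -/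
/-- Vertices of the directed graph `Γ₅`: integers `n ≥ 2` not divisible by 5. -/
def IsVertex (n : ℕ) : Prop := 2 ≤ n ∧ ¬ (5 ∣ n)

/-- Edges of `Γ₅`: from `m` to `n` iff `n = (m+5)²` (up-edge) or `m = n²` (down-edge). -/
def IsEdge (m n : ℕ) : Prop := n = (m + 5) ^ 2 ∨ m = n ^ 2

/-- A path in `Γ₅` of length `L`: vertices `v 0, …, v L`, each consecutive
pair joined by an edge. -/
def IsPath (v : ℕ → ℕ) (L : ℕ) : Prop :=
  (∀ j ≤ L, IsVertex (v j)) ∧ ∀ j < L, IsEdge (v j) (v (j + 1))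

/-!
Composing an up-edge `m → (m + 5)²` with the down-edge `(m + 5)² → m + 5` moves up by 5, so
`x` reaches every larger vertex in its residue class mod 5, and `y` is reached from every
`y ^ 2 ^ k` by down-edges. Two up-edges take `x` to `((x + 5)² + 5)² ≡ x⁴ ≡ 1 (mod 5)`, and by
Fermat `y ^ 2 ^ k ≡ 1 (mod 5)` for `k ≥ 2`; taking `k` large makes `y ^ 2 ^ k` exceed the former.
-/

theorem Nat.pow_modEq_one_of_sub_one_dvd {p n e : ℕ} (hp : p.Prime) (hn : ¬ p ∣ n)
    (he : p - 1 ∣ e) : n ^ e ≡ 1 [MOD p] := by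
  obtain ⟨c, rfl⟩ := he
  have hfermat := Nat.ModEq.pow_card_sub_one_eq_one hp ((hp.coprime_iff_not_dvd.mpr hn).symm)
  simpa [pow_mul] using hfermat.pow c

theorem Nat.lt_pow_two_pow {y : ℕ} (hy : 2 ≤ y) (k : ℕ) : k < y ^ 2 ^ k :=
  calc k < 2 ^ k := k.lt_two_pow_self
    _ < 2 ^ 2 ^ k := (2 ^ k).lt_two_pow_self
    _ ≤ y ^ 2 ^ k := Nat.pow_le_pow_left hy _

theorem IsVertex.add_five {n : ℕ} (hn : IsVertex n) : IsVertex (n + 5) :=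
  ⟨by omega, fun h => hn.2 (by omega)⟩

theorem IsVertex.pow {n k : ℕ} (hn : IsVertex n) (hk : k ≠ 0) : IsVertex (n ^ k) :=
  ⟨hn.1.trans (Nat.le_self_pow hk n), fun h => hn.2 (Nat.prime_five.dvd_of_dvd_pow h)⟩

def IsAdj (m n : ℕ) : Prop := IsVertex m ∧ IsVertex n ∧ IsEdge m n

theorem exists_isPath_of_reflTransGen {x y : ℕ} (h : Relation.ReflTransGen IsAdj x y)
    (hy : IsVertex y) : ∃ (v : ℕ → ℕ) (L : ℕ), IsPath v L ∧ v 0 = x ∧ v L = y := by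
  induction h using Relation.ReflTransGen.head_induction_on with
  | refl =>
    exact ⟨fun _ => y, 0, ⟨fun _ _ => hy, fun _ h => (Nat.not_lt_zero _ h).elim⟩, rfl, rfl⟩
  | @head a b hab _ ih =>
    obtain ⟨v, L, ⟨hv, hedge⟩, rfl, rfl⟩ := ih
    refine ⟨fun j => if j = 0 then a else v (j - 1), L + 1, ⟨?_, ?_⟩, rfl, by simp⟩
    · rintro (_ | j) hj
      · exact hab.1
      · simpa using hv j (by omega)
    · rintro (_ | j) hj
      · simpa using hab.2.2
      · simpa using hedge j (by omega)

section Reachability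

local notation "Reaches" => Relation.ReflTransGen IsAdj

variable {x y : ℕ}

theorem reaches_sq_add_five (hx : IsVertex x) : Reaches x ((x + 5) ^ 2) :=
  .single ⟨hx, hx.add_five.pow two_ne_zero, Or.inl rfl⟩

theorem reaches_of_sq (hy : IsVertex y) : Reaches (y ^ 2) y :=
  .single ⟨hy.pow two_ne_zero, hy, Or.inr rfl⟩

theorem reaches_add_five_mul (hx : IsVertex x) (k : ℕ) : Reaches x (x + 5 * k) := by
  induction k with
  | zero => exact .refl
  | succ k ih =>
    have hk : IsVertex (x + 5 * k) := ⟨by linarith [hx.1], fun h => hx.2 (by omega)⟩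
    exact ih.trans ((reaches_sq_add_five hk).trans (reaches_of_sq hk.add_five))

theorem reaches_of_le_of_modEq {z : ℕ} (hx : IsVertex x) (hxz : x ≤ z) (h : z ≡ x [MOD 5]) :
    Reaches x z := by
  obtain ⟨k, hk⟩ := (Nat.modEq_iff_dvd' hxz).mp h.symm
  simpa [← hk, Nat.add_sub_cancel' hxz] using reaches_add_five_mul hx k

theorem reaches_of_pow_two_pow (hy : IsVertex y) (k : ℕ) : Reaches (y ^ 2 ^ k) y := by
  induction k with
  | zero => simpa using .refl
  | succ k ih => simpa [pow_succ, pow_mul] using (reaches_of_sq (hy.pow (by positivity))).trans ih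

theorem reaches_of_isVertex (hx : IsVertex x) (hy : IsVertex y) : Reaches x y := by
  set a := ((x + 5) ^ 2 + 5) ^ 2
  have hva : IsVertex a := (hx.add_five.pow two_ne_zero).add_five.pow two_ne_zero
  have hxa : Reaches x a :=
    (reaches_sq_add_five hx).trans (reaches_sq_add_five (hx.add_five.pow two_ne_zero))
  have ha : a ≡ 1 [MOD 5] := by
    have hshift (n : ℕ) : (n + 5) ^ 2 ≡ n ^ 2 [MOD 5] := Nat.ModEq.pow 2 (Nat.add_mod_right n 5)
    calc a ≡ ((x + 5) ^ 2) ^ 2 [MOD 5] := hshift _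
      _ ≡ (x ^ 2) ^ 2 [MOD 5] := (hshift x).pow 2
      _ = x ^ 4 := by ring
      _ ≡ 1 [MOD 5] := Nat.pow_modEq_one_of_sub_one_dvd Nat.prime_five hx.2 dvd_rfl
  set t := y ^ 2 ^ (a + 2)
  have ht : t ≡ 1 [MOD 5] :=
    Nat.pow_modEq_one_of_sub_one_dvd Nat.prime_five hy.2 (Dvd.intro_left _ (pow_add 2 a 2).symm)
  have hat : a ≤ t := (Nat.lt_pow_two_pow hy.1 (a + 2)).le.trans' (by omega)
  exact (hxa.trans (reaches_of_le_of_modEq hva hat (ht.trans ha.symm))).trans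
    (reaches_of_pow_two_pow hy (a + 2))

end Reachability

/-- `Γ₅` is connected in the directed sense: for all integers `x, y ≥ 2`
with `5 ∤ x` and `5 ∤ y` there is a path in `Γ₅` from `x` to `y`. -/
theorem gamma5_connected (x y : ℕ) (hx2 : 2 ≤ x) (hx5 : ¬ (5 ∣ x))
    (hy2 : 2 ≤ y) (hy5 : ¬ (5 ∣ y)) :
    ∃ (v : ℕ → ℕ) (L : ℕ), IsPath v L ∧ v 0 = x ∧ v L = y :=
  exists_isPath_of_reflTransGen (reaches_of_isVertex ⟨hx2, hx5⟩ ⟨hy2, hy5⟩) ⟨hy2, hy5⟩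
end

section
/- For every integer x ≥ 2 with 5 ∤ x there exists an integer i ≥ 1 such that x ∈ R_i. -/
/-- The rows `R_i` (with `R 0 = ∅` so that indexing starts at `R 1 = {2}`):
`R_{k+1} = {(x+5)² : x ∈ R_k} ∪ {x : x² ∈ R_k}`. -/
def R : ℕ → Set ℕ
  | 0 => ∅
  | 1 => {2}
  | (k + 2) => ((fun x => (x + 5) ^ 2) '' R (k + 1)) ∪ {x | x ^ 2 ∈ R (k + 1)}

lemma sq_mem {k x : ℕ} (hk : 1 ≤ k) (h : x ∈ R k) : (x + 5) ^ 2 ∈ R (k + 1) := by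
  cases k with
  | zero => omega
  | succ j => exact Or.inl ⟨x, h, rfl⟩

lemma root_mem {k x : ℕ} (hk : 1 ≤ k) (h : x ^ 2 ∈ R k) : x ∈ R (k + 1) := by
  cases k with
  | zero => omega
  | succ j => exact Or.inr h

lemma add_mul5 {k x : ℕ} (hk : 1 ≤ k) (h : x ∈ R k) : ∀ m, x + 5 * m ∈ R (k + 2 * m) := by
  intro m
  induction m with
  | zero => simpa using h
  | succ n ih =>
    have h1 : (x + 5 * n + 5) ^ 2 ∈ R (k + 2 * n + 1) := sq_mem (by omega) ih
    have h2 : x + 5 * n + 5 ∈ R (k + 2 * n + 2) := root_mem (by omega) h1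
    have e1 : x + 5 * (n + 1) = x + 5 * n + 5 := by ring
    have e2 : k + 2 * (n + 1) = k + 2 * n + 2 := by ring
    rw [e1, e2]; exact h2

lemma reach {a k : ℕ} (hk : 1 ≤ k) (ha : a ∈ R k) {n : ℕ} (hle : a ≤ n)
    (hmod : n % 5 = a % 5) : ∃ i, 1 ≤ i ∧ n ∈ R i := by
  have h5 : 5 ∣ n - a := by omega
  obtain ⟨m, hm⟩ := h5
  refine ⟨k + 2 * m, by omega, ?_⟩
  have hn : n = a + 5 * m := by omega
  rw [hn]; exact add_mul5 hk ha m

/-- Every integer `x ≥ 2` with `5 ∤ x` appears in some row `R_i`, `i ≥ 1`. -/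
theorem mem_row_of_not_dvd (x : ℕ) (hx2 : 2 ≤ x) (hx5 : ¬ (5 ∣ x)) :
    ∃ i : ℕ, 1 ≤ i ∧ x ∈ R i := by
  have h2 : (2 : ℕ) ∈ R 1 := rfl
  have h49 : (49 : ℕ) ∈ R 2 := by
    have := sq_mem (k := 1) le_rfl h2
    norm_num at this
    exact this
  have h2916 : (2916 : ℕ) ∈ R 3 := by
    have := sq_mem (k := 2) (by norm_num) h49
    norm_num at this
    exact this
  -- x^16 ≡ 1 mod 5
  have hmod : x ^ 16 % 5 = 1 := by
    have hlt : x % 5 < 5 := Nat.mod_lt _ (by norm_num)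
    have hne : x % 5 ≠ 0 := fun h => hx5 (Nat.dvd_of_mod_eq_zero h)
    rw [Nat.pow_mod]
    interval_cases h : x % 5 <;> simp_all
  have hle : (2916 : ℕ) ≤ x ^ 16 := by
    calc (2916 : ℕ) ≤ 2 ^ 16 := by norm_num
    _ ≤ x ^ 16 := Nat.pow_le_pow_left hx2 16
  obtain ⟨i, hi, hmem⟩ := reach (by norm_num) h2916 hle (by omega)
  have e8 : (x ^ 8) ^ 2 = x ^ 16 := by ring
  have m8 : x ^ 8 ∈ R (i + 1) := root_mem hi (e8 ▸ hmem)
  have e4 : (x ^ 4) ^ 2 = x ^ 8 := by ring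
  have m4 : x ^ 4 ∈ R (i + 2) := root_mem (by omega) (e4 ▸ m8)
  have e2 : (x ^ 2) ^ 2 = x ^ 4 := by ring
  have m2 : x ^ 2 ∈ R (i + 3) := root_mem (by omega) (e2 ▸ m4)
  exact ⟨i + 4, by omega, root_mem (by omega) m2⟩
end

section
/- Let v₀, v₁, …, v_L be a path in Γ₅ with every vertex v_j ≥ 2, and suppose the maximum M of the vertices v₀, …, v_L is attained at an index i with 1 ≤ i ≤ L − 2 (at least one vertex before M and at least two vertices after M). Then v_{i+1}² = M and v_{i+2}⁴ = M; in particular M is a perfect fourth power. -/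
/-- If the maximum `M` of a path `v 0, …, v L` in `Γ₅` (all vertices `≥ 2`)
is attained at an index `i` with at least one vertex before and at least two
after, then `v (i+1) ² = M` and `v (i+2) ⁴ = M`; in particular `M` is a
perfect fourth power. -/
theorem max_is_fourth_power (v : ℕ → ℕ) (L : ℕ) (hpath : IsPath v L)
    (hge : ∀ j ≤ L, 2 ≤ v j) (i : ℕ) (hi1 : 1 ≤ i) (hi2 : i + 2 ≤ L)
    (hmax : ∀ j ≤ L, v j ≤ v i) :
    (v (i + 1)) ^ 2 = v i ∧ (v (i + 2)) ^ 4 = v i ∧ ∃ a : ℕ, v i = a ^ 4 := by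
  obtain ⟨hv, he⟩ := hpath
  have e1 := he i (by omega)
  have e2 := he (i + 1) (by omega)
  have h1 : v (i + 1) ^ 2 = v i := by
    rcases e1 with h | h
    · exfalso
      have hle := hmax (i + 1) (by omega)
      nlinarith [hge i (by omega)]
    · exact h.symm
  have h2 : v (i + 2) ^ 2 = v (i + 1) := by
    rcases e2 with h | h
    · exfalso
      have hle := hmax (i + 2) (by omega)
      nlinarith [hge (i + 1) (by omega)]
    · exact h.symm
  refine ⟨h1, ?_, ⟨v (i + 2), ?_⟩⟩ <;> nlinarith [h1, h2]
end

section
/- Let v₀, v₁, …, v_L be a path in Γ₅ with every vertex v_j ≥ 2, and suppose the maximum M of the vertices v₀, …, v_L is attained at an index i with 2 ≤ i ≤ L − 2 (at least two vertices before M and at least two vertices after M). Then, writing z = v_{i+2}, the five vertices centered at M are v_{i−2} = (z² − 5)², v_{i−1} = z² − 5, v_i = M = z⁴, v_{i+1} = z², and v_{i+2} = z; in particular M is the target of an up-edge that is preceded by a down-edge and followed by two down-edges. -/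
/-- If the maximum `M` of a path `v 0, …, v L` in `Γ₅` (all vertices `≥ 2`)
is attained at an index `i` with at least two vertices before and at least
two after, then writing `z = v (i+2)` the five vertices centered at `M` are
`(z² − 5)², z² − 5, z⁴, z², z`. -/
theorem max_local_shape (v : ℕ → ℕ) (L : ℕ) (hpath : IsPath v L)
    (hge : ∀ j ≤ L, 2 ≤ v j) (i : ℕ) (hi1 : 2 ≤ i) (hi2 : i + 2 ≤ L)
    (hmax : ∀ j ≤ L, v j ≤ v i) :
    v (i - 2) = ((v (i + 2)) ^ 2 - 5) ^ 2 ∧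
    v (i - 1) = (v (i + 2)) ^ 2 - 5 ∧
    v i = (v (i + 2)) ^ 4 ∧
    v (i + 1) = (v (i + 2)) ^ 2 := by
  obtain ⟨k, rfl⟩ : ∃ k, i = k + 2 := ⟨i - 2, by omega⟩
  obtain ⟨hv, he⟩ := hpath
  have i1 : k + 2 - 2 = k := by omega
  have i2 : k + 2 - 1 = k + 1 := by omega
  have i3 : k + 2 + 1 = k + 3 := by omega
  have i4 : k + 2 + 2 = k + 4 := by omega
  rw [i1, i2, i3, i4]
  have e0 := he k (by omega)
  have e1 := he (k + 1) (by omega)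
  have e2 : IsEdge (v (k + 2)) (v (k + 3)) := by rw [← i3]; exact he (k + 2) (by omega)
  have e3 : IsEdge (v (k + 3)) (v (k + 4)) := by
    have := he (k + 3) (by omega)
    rwa [show k + 3 + 1 = k + 4 by omega] at this
  rw [show k + 1 + 1 = k + 2 by omega] at e1
  have ga := hge k (by omega)
  have gb := hge (k + 1) (by omega)
  have gM := hge (k + 2) (by omega)
  have gc := hge (k + 3) (by omega)
  have gz := hge (k + 4) (by omega)
  have mb := hmax (k + 1) (by omega)
  have mc := hmax (k + 3) (by omega)
  have mz := hmax (k + 4) (by omega)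
  set a := v k
  set b := v (k + 1)
  set M := v (k + 2)
  set c := v (k + 3)
  set z := v (k + 4)
  -- edge i → i+1 must be a down-edge: M = c²
  have hMc : M = c ^ 2 := by
    rcases e2 with h | h
    · exfalso
      have : M + 5 ≤ (M + 5) ^ 2 := Nat.le_self_pow (by norm_num) _
      omega
    · exact h
  -- edge i+1 → i+2 must be a down-edge: c = z²
  have hcz : c = z ^ 2 := by
    rcases e3 with h | h
    · exfalso
      have : c ^ 2 < (c + 5) ^ 2 := Nat.pow_lt_pow_left (by omega) (by norm_num)
      omega
    · exact h
  -- edge i-1 → i must be an up-edge: M = (b+5)²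
  have hMb : M = (b + 5) ^ 2 := by
    rcases e1 with h | h
    · exact h
    · exfalso
      have h2 : M ^ 1 < M ^ 2 := Nat.pow_lt_pow_right gM (by norm_num)
      rw [pow_one] at h2
      omega
  -- hence b + 5 = c
  have hbc : b + 5 = c := by
    have h : (b + 5) ^ 2 = c ^ 2 := by rw [← hMb, hMc]
    exact Nat.pow_left_injective (by norm_num) h
  -- edge i-2 → i-1 must be a down-edge: a = b²
  have hab : a = b ^ 2 := by
    rcases e0 with h | h
    · exfalso
      -- b = (a+5)² and b + 5 = z², with a + 5 ≥ 7 : impossible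
      have hz2 : z ^ 2 = (a + 5) ^ 2 + 5 := by rw [← hcz, ← hbc, h]
      have hlt : a + 5 < z := by
        by_contra hcon
        push_neg at hcon
        have : z ^ 2 ≤ (a + 5) ^ 2 := Nat.pow_le_pow_left hcon 2
        omega
      have h6 : (a + 6) ^ 2 ≤ z ^ 2 := Nat.pow_le_pow_left (by omega) 2
      have hexp : (a + 6) ^ 2 = (a + 5) ^ 2 + 2 * a + 11 := by ring
      omega
    · exact h
  have hb : b = z ^ 2 - 5 := by omega
  refine ⟨by rw [hab, hb], hb, ?_, by omega⟩
  rw [hMc, hcz]; ring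
end

section
/- Let a be an integer with 2 ≤ a < 100 and 5 ∤ a. If a ∈ R_i for some i ≤ 150, then there exists a path in Γ₅ from 2 to a, of length at most i − 1, all of whose vertices are at most 188⁴. -/
lemma mem_R_succ {k n : ℕ} :
    n ∈ R (k+2) ↔ (∃ x ∈ R (k+1), (x+5)^2 = n) ∨ n^2 ∈ R (k+1) := by
  simp [R, Set.mem_union, Set.mem_image, Set.mem_setOf_eq]

lemma mem_R_zero {n : ℕ} : n ∉ R 0 := by simp [R]

lemma mem_R_one {n : ℕ} : n ∈ R 1 ↔ n = 2 := by simp [R]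

/-- Invariant: all members of any row are ≥ 2 and not divisible by 5. -/
lemma mem_R_prop : ∀ j n, n ∈ R j → 2 ≤ n ∧ ¬ (5 ∣ n) := by
  intro j
  induction j using Nat.strong_induction_on with
  | _ j ih =>
    rcases j with _ | _ | k
    · intro n hn; exact absurd hn mem_R_zero
    · intro n hn
      rw [mem_R_one] at hn
      subst hn; exact ⟨le_refl 2, by decide⟩
    · intro n hn
      rcases mem_R_succ.mp hn with ⟨x, hx, hxe⟩ | hdown
      · obtain ⟨hx2, hx5⟩ := ih (k+1) (by omega) x hx
        constructor
        · subst hxe; nlinarith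
        · subst hxe
          intro h
          have h5 : (5:ℕ) ∣ x + 5 := Nat.Prime.dvd_of_dvd_pow (by norm_num) h
          omega
      · obtain ⟨hn2, hn5⟩ := ih (k+1) (by omega) (n^2) hdown
        constructor
        · by_contra h
          have : n ≤ 1 := by omega
          have := Nat.pow_le_pow_left this 2
          omega
        · intro h; exact hn5 (Dvd.dvd.pow h (by norm_num))

/-- Key impossibility lemma: a non-square in the window `((c-1)², c²)` with
`c ≥ 189` that lies in row `j` forces `5*(j/2)` to be at least
`min (w - (c-1)²) 375`; and `(e²)² ∈ R j` with `e ≥ 189` forces `j ≥ 149`. -/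
lemma EF : ∀ j : ℕ,
    (∀ c w : ℕ, 189 ≤ c → (c-1)^2 < w → w < c^2 → w ∈ R j →
      min (w - (c-1)^2) 375 ≤ 5 * (j / 2)) ∧
    (∀ e : ℕ, 189 ≤ e → (e^2)^2 ∈ R j → 149 ≤ j) := by
  intro j
  induction j using Nat.strong_induction_on with
  | _ j ih =>
    constructor
    · intro c w hc h1 h2 hw
      have hc188 : (188:ℕ)^2 ≤ (c-1)^2 := Nat.pow_le_pow_left (by omega) 2
      have hwbig : 35344 < w := by norm_num at hc188; omega
      rcases j with _ | _ | k
      · exact absurd hw mem_R_zero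
      · rw [mem_R_one] at hw; omega
      · rcases mem_R_succ.mp hw with ⟨x, hx, hxe⟩ | hdown
        · exfalso
          have hl : c - 1 < x + 5 := by
            have := (Nat.pow_lt_pow_iff_left (n := 2) (by norm_num)).mp (by omega : (c-1)^2 < (x+5)^2)
            omega
          have hr : x + 5 < c := by
            have := (Nat.pow_lt_pow_iff_left (n := 2) (by norm_num)).mp (by omega : (x+5)^2 < c^2)
            omega
          omega
        · -- w^2 ∈ R (k+1)
          by_cases hb : w - (c-1)^2 ≤ 5
          · omega
          · rcases k with _ | k'
            · -- w^2 ∈ R 1 : w^2 = 2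
              rw [mem_R_one] at hdown
              have : 2 ≤ w := by omega
              have := Nat.pow_le_pow_left this 2
              omega
            · rcases mem_R_succ.mp hdown with ⟨x, hx, hxe⟩ | hdd
              · -- w^2 = (x+5)^2, so x = w - 5
                have hxw : x + 5 = w :=
                  Nat.pow_left_injective (by norm_num) hxe
                have hrec := (ih (k'+1) (by omega)).1 c (w-5) hc (by omega) (by omega)
                  (by rw [show w - 5 = x by omega]; exact hx)
                omega
              · -- (w^2)^2 ∈ R (k'+1)
                have hrec := (ih (k'+1) (by omega)).2 w (by omega) hdd
                omega
    · intro e he hmem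
      have he2 : 189 ≤ e^2 := le_trans he (Nat.le_self_pow (by norm_num) e)
      have hee : 35721 ≤ e^2 := by calc (35721:ℕ) = 189^2 := by norm_num
                                        _ ≤ e^2 := Nat.pow_le_pow_left he 2
      rcases j with _ | _ | k
      · exact absurd hmem mem_R_zero
      · rw [mem_R_one] at hmem
        have : 189 ≤ (e^2)^2 := le_trans he2 (Nat.le_self_pow (by norm_num) _)
        omega
      · rcases mem_R_succ.mp hmem with ⟨x, hx, hxe⟩ | hdown
        · -- (e^2)^2 = (x+5)^2, so x = e^2 - 5
          have hxw : x + 5 = e^2 := Nat.pow_left_injective (by norm_num) hxe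
          obtain ⟨d, rfl⟩ : ∃ d, e = d + 189 := ⟨e - 189, by omega⟩
          have hex : ((d+189):ℕ)^2 = d^2 + 378*d + 35721 := by ring
          have hex2 : ((d+189-1):ℕ)^2 = d^2 + 376*d + 35344 := by
            have : (d+189-1 : ℕ) = d + 188 := by omega
            rw [this]; ring
          have hrec := (ih (k+1) (by omega)).1 (d+189) ((d+189)^2 - 5)
            (by omega) (by omega) (by omega)
            (by rw [show (d+189)^2 - 5 = x by omega]; exact hx)
          omega
        · have hrec := (ih (k+1) (by omega)).2 (e^2) he2 hdown
          omega

def Good (n L₀ : ℕ) : Prop :=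
  ∃ v L, IsPath v L ∧ v 0 = 2 ∧ v L = n ∧ L ≤ L₀ ∧ ∀ j ≤ L, v j ≤ 188 ^ 4

lemma isVertex_two : IsVertex 2 := ⟨le_refl 2, by decide⟩

lemma good_two : Good 2 0 :=
  ⟨fun _ => 2, 0,
    ⟨fun _ _ => isVertex_two, fun j hj => absurd hj (Nat.not_lt_zero j)⟩,
    rfl, rfl, le_refl 0, fun _ _ => by norm_num⟩

lemma good_mono {n L₀ L₁ : ℕ} (h : Good n L₀) (hle : L₀ ≤ L₁) : Good n L₁ := by
  obtain ⟨v, L, hp, h0, hL, hLle, hbd⟩ := h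
  exact ⟨v, L, hp, h0, hL, le_trans hLle hle, hbd⟩

lemma good_extend {n m L₀ : ℕ} (h : Good n L₀) (hv : IsVertex m)
    (he : IsEdge n m) (hm : m ≤ 188^4) : Good m (L₀+1) := by
  obtain ⟨v, L, ⟨hvert, hedge⟩, h0, hL, hLle, hbd⟩ := h
  refine ⟨fun j => if j ≤ L then v j else m, L+1, ⟨?_, ?_⟩, ?_, ?_, by omega, ?_⟩
  · intro j hj
    by_cases hjL : j ≤ L
    · simpa [hjL] using hvert j hjL
    · simpa [hjL] using hv
  · intro j hj
    by_cases hjL : j < L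
    · have h1 : j ≤ L := le_of_lt hjL
      have h2 : j + 1 ≤ L := hjL
      simpa [h1, h2] using hedge j hjL
    · have hjeq : j = L := by omega
      subst hjeq
      simpa [hL, show ¬ (j + 1 ≤ j) from by omega] using he
  · simpa using h0
  · simp
  · intro j hj
    by_cases hjL : j ≤ L
    · simpa [hjL] using hbd j hjL
    · simpa [hjL] using hm

/-- The constructive lemma: small members of `R j` (for `j ≤ 150`) admit
bounded paths, mutually with a version for `n` with `n² ∈ R j`. -/
lemma GB : ∀ j : ℕ,
    (∀ n : ℕ, j ≤ 150 → n ≤ 35344 → n ∈ R j → Good n (j-1)) ∧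
    (∀ n : ℕ, j ≤ 149 → 2 ≤ n → n ≤ 35344 → n^2 ∈ R j → Good n j) := by
  intro j
  induction j using Nat.strong_induction_on with
  | _ j ih =>
    constructor
    · intro n hj hn hmem
      rcases j with _ | _ | k
      · exact absurd hmem mem_R_zero
      · rw [mem_R_one] at hmem; subst hmem; exact good_two
      · rcases mem_R_succ.mp hmem with ⟨x, hx, hxe⟩ | hdown
        · obtain ⟨hx2, hx5⟩ := mem_R_prop _ x hx
          have hxle : x ≤ 183 := by
            by_contra h
            have : (189:ℕ)^2 ≤ (x+5)^2 := Nat.pow_le_pow_left (by omega) 2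
            norm_num at this; omega
          have hG : Good x k := by
            have := (ih (k+1) (by omega)).1 x (by omega) (by omega) hx
            simpa using this
          have hext := good_extend hG (m := n)
            ⟨by nlinarith, by
              intro h
              have h5 : (5:ℕ) ∣ x + 5 := Nat.Prime.dvd_of_dvd_pow (by norm_num)
                (by rw [hxe]; exact h)
              omega⟩
            (Or.inl hxe.symm)
            (by norm_num; omega)
          simpa using hext
        · have hn2 : 2 ≤ n := by
            obtain ⟨h2, _⟩ := mem_R_prop _ (n^2) hdown
            by_contra h
            have : n ≤ 1 := by omega
            have := Nat.pow_le_pow_left this 2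
            omega
          have := (ih (k+1) (by omega)).2 n (by omega) hn2 hn hdown
          simpa using this
    · intro n hj h2 hn hmem
      rcases j with _ | _ | k
      · exact absurd hmem mem_R_zero
      · rw [mem_R_one] at hmem
        have : (2:ℕ)^2 ≤ n^2 := Nat.pow_le_pow_left h2 2
        norm_num at this; omega
      · obtain ⟨hn2ge, hn5sq⟩ := mem_R_prop _ (n^2) hmem
        have hn5 : ¬ (5 ∣ n) := fun h => hn5sq (Dvd.dvd.pow h (by norm_num))
        rcases mem_R_succ.mp hmem with ⟨x, hx, hxe⟩ | hdown
        · have hxn : x + 5 = n := Nat.pow_left_injective (by norm_num) hxe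
          obtain ⟨hx2, hx5⟩ := mem_R_prop _ x hx
          have hG : Good x k := by
            have := (ih (k+1) (by omega)).1 x (by omega) (by omega) hx
            simpa using this
          have hnsq : n^2 ≤ 188^4 := by
            calc n^2 ≤ 35344^2 := Nat.pow_le_pow_left hn 2
              _ = 188^4 := by norm_num
          have g1 : Good (n^2) (k+1) := good_extend hG
            ⟨by nlinarith, fun h => hn5sq h⟩
            (Or.inl (by rw [hxn])) hnsq
          have g2 : Good n (k+2) := good_extend g1
            ⟨h2, hn5⟩ (Or.inr rfl) (by norm_num; omega)
          exact g2
        · by_cases hsmall : n ≤ 188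
          · have hG : Good (n^2) (k+1) := (ih (k+1) (by omega)).2 (n^2)
              (by omega) hn2ge
              (by calc n^2 ≤ 188^2 := Nat.pow_le_pow_left hsmall 2
                    _ = 35344 := by norm_num)
              hdown
            have := good_extend hG ⟨h2, hn5⟩ (Or.inr rfl) (by norm_num; omega)
            simpa using this
          · exfalso
            have := (EF (k+1)).2 n (by omega) hdown
            omega


/-- If `2 ≤ a < 100`, `5 ∤ a`, and `a ∈ R_i` for some `i ≤ 150`, then there
is a path in `Γ₅` from `2` to `a` of length at most `i − 1` all of whose
vertices are at most `188⁴`. -/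
theorem bounded_path_of_early_appearance (a : ℕ) (ha2 : 2 ≤ a) (ha100 : a < 100)
    (ha5 : ¬ (5 ∣ a)) (i : ℕ) (hi : i ≤ 150) (hmem : a ∈ R i) :
    ∃ (v : ℕ → ℕ) (L : ℕ), IsPath v L ∧ v 0 = 2 ∧ v L = a ∧ L ≤ i - 1 ∧
      ∀ j ≤ L, v j ≤ 188 ^ 4 := by
  have := (GB i).1 a hi (by omega) hmem
  obtain ⟨v, L, hp, h0, hL, hLle, hbd⟩ := this
  exact ⟨v, L, hp, h0, hL, hLle, hbd⟩
end

section
/- Let p be an odd prime and r ≥ 2 an integer not divisible by p. Then the solution of Problem A1(p, p−1, r) is maximal: S(p, p−1, r) = {n ∈ ℕ : n ≥ 2 and p ∤ n}. -/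
/-- The smallest set `S(d,e,r)` of positive integers such that `r ∈ S`,
`n ∈ S` whenever `n^e ∈ S`, and `(n+d)^e ∈ S` whenever `n ∈ S`. -/
inductive GenS (d e r : ℕ) : ℕ → Prop
  | base : GenS d e r r
  | down (n : ℕ) : GenS d e r (n ^ e) → GenS d e r n
  | up (n : ℕ) : GenS d e r n → GenS d e r ((n + d) ^ e)

/-- For an odd prime `p` and `r ≥ 2` with `p ∤ r`, the solution of
Problem `A1(p, p−1, r)` is maximal. -/
theorem genS_maximal_of_exponent_pred (p r : ℕ) (hp : p.Prime) (hodd : Odd p)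
    (hr2 : 2 ≤ r) (hpr : ¬ (p ∣ r)) :
    {n : ℕ | GenS p (p - 1) r n} = {n : ℕ | 2 ≤ n ∧ ¬ (p ∣ n)} := by
  haveI := Fact.mk hp
  have hp2 := hp.two_le
  have hpodd := Nat.odd_iff.mp hodd
  have hp3 : 3 ≤ p := by omega
  -- Fermat's little theorem, in ℕ
  have fermat : ∀ m, ¬ p ∣ m → m ^ (p - 1) ≡ 1 [MOD p] := by
    intro m hm
    have h0 : (m : ZMod p) ≠ 0 := by
      rw [Ne, ZMod.natCast_eq_zero_iff]; exact hm
    have h1 := ZMod.pow_card_sub_one_eq_one h0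
    have h2 : ((m ^ (p - 1) : ℕ) : ZMod p) = ((1 : ℕ) : ZMod p) := by
      push_cast; simpa using h1
    exact (ZMod.natCast_eq_natCast_iff _ _ _).mp h2
  -- closure under adding p
  have step : ∀ n, GenS p (p - 1) r n → GenS p (p - 1) r (n + p) :=
    fun n h => GenS.down (n + p) (GenS.up n h)
  have addmul : ∀ k n, GenS p (p - 1) r n → GenS p (p - 1) r (n + p * k) := by
    intro k
    induction k with
    | zero => intro n h; simpa using h
    | succ k ih =>
      intro n h
      have := step _ (ih n h)
      have heq : n + p * k + p = n + p * (k + 1) := by ring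
      rwa [heq] at this
  have hB : GenS p (p - 1) r ((r + p) ^ (p - 1)) := GenS.up r GenS.base
  have hrp : ¬ p ∣ (r + p) := by
    intro hdvd
    have := Nat.dvd_sub hdvd dvd_rfl
    simpa using (hpr (by simpa using this))
  have hBmod : (r + p) ^ (p - 1) ≡ 1 [MOD p] := fermat _ hrp
  have key : ∀ x, (r + p) ^ (p - 1) ≤ x → x ≡ 1 [MOD p] → GenS p (p - 1) r x := by
    intro x hx hxm
    have hmod : (r + p) ^ (p - 1) ≡ x [MOD p] := hBmod.trans hxm.symm
    obtain ⟨k, hk⟩ := (Nat.modEq_iff_dvd' hx).mp hmod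
    have hx' : x = (r + p) ^ (p - 1) + p * k := by omega
    rw [hx']; exact addmul k _ hB
  have ge_case : ∀ m, r + p ≤ m → ¬ p ∣ m → GenS p (p - 1) r m := by
    intro m hm hd
    exact GenS.down m (key _ (Nat.pow_le_pow_left hm _) (fermat m hd))
  have main : ∀ k m, r + p ≤ m + k → 2 ≤ m → ¬ p ∣ m → GenS p (p - 1) r m := by
    intro k
    induction k with
    | zero => intro m hk h2 hd; exact ge_case m (by omega) hd
    | succ k ih =>
      intro m hk h2 hd
      by_cases hm : r + p ≤ m
      · exact ge_case m hm hd
      · have hpow : m + 2 ≤ m ^ (p - 1) := by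
          calc m + 2 ≤ m * m := by nlinarith
          _ = m ^ 2 := (sq m).symm
          _ ≤ m ^ (p - 1) := Nat.pow_le_pow_right (by omega) (by omega)
        refine GenS.down m (ih (m ^ (p - 1)) (by omega) (by omega)
          (fun hdd => hd (hp.dvd_of_dvd_pow hdd)))
  ext n
  simp only [Set.mem_setOf_eq]
  constructor
  · intro h
    induction h with
    | base => exact ⟨hr2, hpr⟩
    | down n h ih =>
      refine ⟨?_, fun hd => ih.2 (dvd_pow hd (by omega))⟩
      by_contra h1
      have hle : n ^ (p - 1) ≤ 1 := by
        calc n ^ (p - 1) ≤ 1 ^ (p - 1) := Nat.pow_le_pow_left (by omega) _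
        _ = 1 := one_pow _
      have := ih.1
      omega
    | up n h ih =>
      constructor
      · calc 2 ≤ n + p := by omega
        _ ≤ (n + p) ^ (p - 1) := Nat.le_self_pow (by omega) _
      · intro hd
        have hnp := hp.dvd_of_dvd_pow hd
        have := Nat.dvd_sub hnp dvd_rfl
        exact ih.2 (by simpa using this)
  · rintro ⟨h2, hd⟩
    exact main (r + p) n (by omega) h2 hd
end

section
/- Let d, e, r ≥ 2 be integers. The solution S(d,e,r) is maximal, i.e. S(d,e,r) = {n ∈ ℕ : n ≥ 2 and d ∤ n}, if and only if all of the following hold: (1) d is prime; (2) d ∤ r; and (3) every prime divisor of d − 1 divides e. -/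
theorem Nat.exists_dvd_pow_of_forall_prime_dvd {a b : ℕ} (ha : a ≠ 0) (hb : b ≠ 0)
    (h : ∀ q : ℕ, q.Prime → q ∣ a → q ∣ b) : ∃ K, a ∣ b ^ K := by
  rw [UniqueFactorizationMonoid.exists_dvd_pow_iff_radical_dvd ha,
    UniqueFactorizationMonoid.radical_dvd_iff_primeFactors_subset hb,
    UniqueFactorizationMonoid.primeFactors_eq_natPrimeFactors]
  intro q hq
  rw [Nat.mem_primeFactors] at hq ⊢
  exact ⟨hq.1, h q hq.1 hq.2.1, hb⟩

theorem ZMod.exists_unit_pow_ne_one {p : ℕ} [Fact p.Prime] {k : ℕ} (hk0 : k ≠ 0)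
    (hk : k < p - 1) : ∃ x : (ZMod p)ˣ, x ^ k ≠ 1 := by
  obtain ⟨g, hg⟩ := IsCyclic.exists_ofOrder_eq_natCard (α := (ZMod p)ˣ)
  refine ⟨g, pow_ne_one_of_lt_orderOf hk0 ?_⟩
  rwa [hg, Nat.card_eq_fintype_card, ZMod.card_units]

theorem ZMod.pow_pow_eq_one_iff {p : ℕ} [Fact p.Prime] {k q e : ℕ} (hkq : k * q = p - 1)
    (hqe : q.Coprime e) (he : e ≠ 0) (x : ZMod p) : (x ^ e) ^ k = 1 ↔ x ^ k = 1 := by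
  rcases eq_or_ne x 0 with rfl | hx
  · have hk : k ≠ 0 := by
      rintro rfl
      have := (Fact.out : p.Prime).two_le
      omega
    simp [zero_pow he, zero_pow hk]
  · have hq : (x ^ k) ^ q = 1 := by rw [← pow_mul, hkq, ZMod.pow_card_sub_one_eq_one hx]
    rw [← pow_mul, mul_comm, pow_mul]
    exact ⟨fun h => (pow_eq_one_iff_of_coprime hqe).1 ⟨hq, h⟩, fun h => by rw [h, one_pow]⟩

namespace GenS

variable {d e r : ℕ}

theorem iff_of_invariant {P : ℕ → Prop} (hpow : ∀ n, P (n ^ e) ↔ P n)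
    (hadd : ∀ n, P (n + d) ↔ P n) {n : ℕ} (h : GenS d e r n) : P n ↔ P r := by
  induction h with
  | base => rfl
  | down n _ ih => exact (hpow n).symm.trans ih
  | up n _ ih => exact ((hpow _).trans (hadd n)).trans ih

theorem prime_dvd_iff {p : ℕ} (hp : p.Prime) (hpd : p ∣ d) (he : e ≠ 0) {n : ℕ}
    (h : GenS d e r n) : p ∣ n ↔ p ∣ r :=
  h.iff_of_invariant (fun _ => hp.prime.dvd_pow_iff_dvd he) (fun _ => Nat.dvd_add_left hpd)

theorem cast_pow_eq_one_iff [Fact d.Prime] {k q : ℕ} (hkq : k * q = d - 1) (hqe : q.Coprime e)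
    (he : e ≠ 0) {n : ℕ} (h : GenS d e r n) : (n : ZMod d) ^ k = 1 ↔ (r : ZMod d) ^ k = 1 :=
  h.iff_of_invariant (P := fun n => (n : ZMod d) ^ k = 1)
    (fun n => by simpa using ZMod.pow_pow_eq_one_iff hkq hqe he n) (fun n => by simp)

theorem two_le (he : e ≠ 0) (hr : 2 ≤ r) {n : ℕ} (h : GenS d e r n) : 2 ≤ n := by
  induction h with
  | base => exact hr
  | down n _ ih =>
    by_contra! hn
    have : n ^ e ≤ 1 := pow_le_one₀ (Nat.zero_le n) (by omega)
    omega
  | up n _ ih =>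
    calc 2 ≤ n + d := by omega
      _ ≤ (n + d) ^ e := Nat.le_self_pow he _

theorem add_mul {n : ℕ} (h : GenS d e r n) (k : ℕ) : GenS d e r (n + d * k) := by
  induction k with
  | zero => simpa using h
  | succ k ih =>
    rw [mul_add_one, ← add_assoc]
    exact down _ (up _ ih)

theorem of_modEq {m t : ℕ} (h : GenS d e r m) (hle : m ≤ t) (hmod : m ≡ t [MOD d]) :
    GenS d e r t := by
  obtain ⟨k, hk⟩ := (Nat.modEq_iff_dvd' hle).1 hmod
  rw [← Nat.add_sub_cancel' hle, hk]
  exact h.add_mul k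

theorem of_pow_pow {n : ℕ} : ∀ k, GenS d e r (n ^ e ^ k) → GenS d e r n
  | 0, h => by simpa using h
  | k + 1, h => of_pow_pow k (down _ (by rwa [pow_succ, pow_mul] at h))

theorem exists_modEq_pow_pow (k : ℕ) : ∃ m, GenS d e r m ∧ m ≡ r ^ e ^ k [MOD d] := by
  induction k with
  | zero => exact ⟨r, base, by simp [Nat.ModEq.refl]⟩
  | succ k ih =>
    obtain ⟨m, hm, hmr⟩ := ih
    refine ⟨(m + d) ^ e, up m hm, ?_⟩
    rw [pow_succ, pow_mul]
    exact (Nat.add_modEq_right.trans hmr).pow e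

theorem of_coprime (he : 2 ≤ e) {K : ℕ} (hK : d.totient ∣ e ^ K) (hr : r.Coprime d) {n : ℕ}
    (hn : 2 ≤ n) (hnd : n.Coprime d) : GenS d e r n := by
  have hfermat : ∀ {x k : ℕ}, x.Coprime d → K ≤ k → x ^ e ^ k ≡ 1 [MOD d] := fun hx hk => by
    obtain ⟨c, hc⟩ := hK.trans (pow_dvd_pow e hk)
    rw [hc, pow_mul]
    simpa using (Nat.ModEq.pow_totient hx).pow c
  obtain ⟨m, hm, hmr⟩ := exists_modEq_pow_pow (d := d) (e := e) (r := r) K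
  apply of_pow_pow (K + m)
  refine hm.of_modEq ?_ ((hmr.trans (hfermat hr le_rfl)).trans (hfermat hnd (by omega)).symm)
  calc m ≤ K + m := by omega
    _ ≤ e ^ (K + m) := (Nat.lt_pow_self he).le
    _ ≤ n ^ e ^ (K + m) := (Nat.lt_pow_self hn).le

theorem add_one_of_forall_mem (hd : 2 ≤ d) (hmax : ∀ n, 2 ≤ n → ¬ d ∣ n → GenS d e r n) :
    GenS d e r (d + 1) :=
  hmax (d + 1) (by omega) fun h => by
    have := Nat.dvd_one.1 (Nat.dvd_add_self_left.1 h)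
    omega

theorem prime_of_forall_mem (hd : 2 ≤ d) (he : e ≠ 0)
    (hmax : ∀ n, 2 ≤ n → ¬ d ∣ n → GenS d e r n) : d.Prime := by
  by_contra hd'
  set p := d.minFac
  have hp : p.Prime := Nat.minFac_prime (by omega)
  have hpd : p ∣ d := Nat.minFac_dvd d
  have hp_mem := hmax p hp.two_le (Nat.not_dvd_of_pos_of_lt hp.pos
    ((Nat.not_prime_iff_minFac_lt hd).1 hd'))
  have hsucc_mem := add_one_of_forall_mem hd hmax
  have hp_succ : p ∣ d + 1 :=
    (prime_dvd_iff hp hpd he hsucc_mem).2 ((prime_dvd_iff hp hpd he hp_mem).1 dvd_rfl)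
  exact hp.one_lt.ne' (Nat.dvd_one.1 ((Nat.dvd_add_right hpd).1 hp_succ))

theorem prime_dvd_of_forall_mem [Fact d.Prime] (he : e ≠ 0)
    (hmax : ∀ n, 2 ≤ n → ¬ d ∣ n → GenS d e r n) {q : ℕ} (hq : q.Prime) (hqd : q ∣ d - 1) :
    q ∣ e := by
  by_contra hqe
  have hd := (Fact.out : d.Prime).two_le
  set k := (d - 1) / q
  have hkq : k * q = d - 1 := Nat.div_mul_cancel hqd
  have hcop : q.Coprime e := (Nat.Prime.coprime_iff_not_dvd hq).2 hqe
  have hk0 : k ≠ 0 := by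
    intro h
    rw [h] at hkq
    omega
  have hr : (r : ZMod d) ^ k = 1 := by
    simpa using cast_pow_eq_one_iff hkq hcop he (add_one_of_forall_mem hd hmax)
  obtain ⟨x, hx⟩ := ZMod.exists_unit_pow_ne_one hk0 (Nat.div_lt_self (by omega) hq.one_lt)
  set n := (x : ZMod d).val + d
  have hn : (n : ZMod d) = x := by simp [n]
  have hnd : ¬ d ∣ n := by
    rw [← ZMod.natCast_eq_zero_iff, hn]
    exact x.ne_zero
  apply hx
  rw [Units.ext_iff, Units.val_pow_eq_pow_val, ← hn, Units.val_one]
  exact (cast_pow_eq_one_iff hkq hcop he (hmax n (by omega) hnd)).2 hr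

end GenS

/-- The solution `S(d,e,r)` is maximal if and only if `d` is prime, `d ∤ r`,
and every prime divisor of `d − 1` divides `e`. -/
theorem genS_maximal_iff (d e r : ℕ) (hd : 2 ≤ d) (he : 2 ≤ e) (hr : 2 ≤ r) :
    {n : ℕ | GenS d e r n} = {n : ℕ | 2 ≤ n ∧ ¬ (d ∣ n)} ↔
      (d.Prime ∧ ¬ (d ∣ r) ∧ ∀ q : ℕ, q.Prime → q ∣ d - 1 → q ∣ e) := by
  have he0 : e ≠ 0 := by omega
  simp only [Set.ext_iff, Set.mem_ofPred_eq]
  constructor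
  · intro hS
    have hmax : ∀ n, 2 ≤ n → ¬ d ∣ n → GenS d e r n := fun n hn hnd => (hS n).2 ⟨hn, hnd⟩
    have hprime := GenS.prime_of_forall_mem hd he0 hmax
    have := Fact.mk hprime
    exact ⟨hprime, ((hS r).1 .base).2, fun q hq hqd => GenS.prime_dvd_of_forall_mem he0 hmax hq hqd⟩
  · rintro ⟨hprime, hdr, hq⟩ n
    obtain ⟨K, hK⟩ := Nat.exists_dvd_pow_of_forall_prime_dvd (by omega : d - 1 ≠ 0) he0 hq
    rw [← Nat.totient_prime hprime] at hK
    have hcop : ∀ {m}, ¬ d ∣ m → m.Coprime d := fun h => (hprime.coprime_iff_not_dvd.2 h).symm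
    exact ⟨fun h => ⟨h.two_le he0 hr, (h.prime_dvd_iff hprime dvd_rfl he0).not.2 hdr⟩,
      fun ⟨hn, hnd⟩ => GenS.of_coprime he hK (hcop hdr) hn (hcop hnd)⟩
end

section
/- Let p be a prime and e ≥ 2 an integer. The e-th power map modulo p is connected if and only if every prime divisor of p − 1 divides e. -/
/-- The `e`-th power map modulo `p` is connected: the equivalence relation on
the units of `ℤ/pℤ` generated by `{(x, x^e)}` relates every pair of units. -/
def PowConnected (p e : ℕ) : Prop :=
  ∀ x y : (ZMod p)ˣ, Relation.EqvGen (fun a b : (ZMod p)ˣ => b = a ^ e) x y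

private lemma eqvgen_iff_of_pres {α : Type*} {r : α → α → Prop} {P : α → Prop}
    (h : ∀ a b, r a b → (P a ↔ P b)) {x y : α} (hxy : Relation.EqvGen r x y) :
    P x ↔ P y := by
  induction hxy with
  | rel a b hab => exact h a b hab
  | refl a => exact Iff.rfl
  | symm a b _ ih => exact ih.symm
  | trans a b c _ _ ih1 ih2 => exact ih1.trans ih2

private lemma eqvgen_pow_iter {G : Type*} [Monoid G] (e : ℕ) (k : ℕ) (x : G) :
    Relation.EqvGen (fun a b : G => b = a ^ e) x (x ^ e ^ k) := by
  induction k generalizing x with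
  | zero => simpa using Relation.EqvGen.refl x
  | succ k ih =>
      refine Relation.EqvGen.trans _ _ _ (Relation.EqvGen.rel x (x ^ e) rfl) ?_
      have h := ih (x ^ e)
      rwa [← pow_mul, ← pow_succ'] at h

private lemma dvd_pow_of_primes (n e : ℕ) (he : 1 ≤ e) (hn : n ≠ 0)
    (h : ∀ q : ℕ, q.Prime → q ∣ n → q ∣ e) : n ∣ e ^ n := by
  rw [← Nat.factorization_le_iff_dvd hn (pow_ne_zero _ (by omega))]
  intro q
  rcases Nat.eq_zero_or_pos (n.factorization q) with h0 | h0
  · simp [h0]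
  · have hmem : q ∈ n.primeFactors := by
      rw [← Nat.support_factorization]
      exact Finsupp.mem_support_iff.mpr (by omega)
    have hq : q.Prime := Nat.prime_of_mem_primeFactors hmem
    have hqn : q ∣ n := Nat.dvd_of_mem_primeFactors hmem
    have hqe : q ∣ e := h q hq hqn
    have h1 : 1 ≤ e.factorization q :=
      (Nat.Prime.factorization_pos_of_dvd hq (by omega) hqe)
    have h2 : n.factorization q < n := Nat.factorization_lt q hn
    calc n.factorization q ≤ n := h2.le
      _ ≤ n * e.factorization q := Nat.le_mul_of_pos_right n h1
      _ = (e ^ n).factorization q := by rw [Nat.factorization_pow]; rfl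

/-- For a prime `p` and `e ≥ 2`, the `e`-th power map modulo `p` is connected
if and only if every prime divisor of `p − 1` divides `e`. -/
theorem powConnected_iff (p e : ℕ) (hp : p.Prime) (he : 2 ≤ e) :
    PowConnected p e ↔ ∀ q : ℕ, q.Prime → q ∣ p - 1 → q ∣ e := by
  haveI : Fact p.Prime := ⟨hp⟩
  have hcard : Fintype.card (ZMod p)ˣ = p - 1 := by
    rw [ZMod.card_units_eq_totient, Nat.totient_prime hp]
  have hncard : Nat.card (ZMod p)ˣ = p - 1 := by
    rw [Nat.card_eq_fintype_card, hcard]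
  constructor
  · intro hc q hq hqn
    by_contra hqe
    have hn0 : 0 < p - 1 := by
      have := hp.two_le; rcases Nat.eq_zero_or_pos (p - 1) with h0 | h0
      · rw [h0] at hqn; simp at hqn; omega
      · exact h0
    obtain ⟨m, hm⟩ := hqn
    have hm0 : 0 < m := by
      rcases Nat.eq_zero_or_pos m with rfl | h0
      · omega
      · exact h0
    obtain ⟨g, hg⟩ := IsCyclic.exists_generator (α := (ZMod p)ˣ)
    have hog : orderOf g = p - 1 := by
      rw [orderOf_eq_card_of_forall_mem_zpowers hg, hncard]
    have key : ∀ a b : (ZMod p)ˣ, b = a ^ e → ((a ^ m = 1) ↔ (b ^ m = 1)) := by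
      rintro a b rfl
      constructor
      · intro h
        rw [← pow_mul, mul_comm, pow_mul, h, one_pow]
      · intro h
        have h1 : orderOf a ∣ e * m := by
          rw [orderOf_dvd_iff_pow_eq_one, pow_mul]
          exact h
        have h2 : orderOf a ∣ q * m := by
          rw [← hm, ← hcard]
          exact orderOf_dvd_card
        have hco : Nat.gcd e q = 1 := Nat.Coprime.gcd_eq_one
          (Nat.Coprime.symm ((Nat.Prime.coprime_iff_not_dvd hq).mpr hqe))
        have h3 : orderOf a ∣ m := by
          have h4 := Nat.dvd_gcd h1 h2
          rwa [Nat.gcd_mul_right, hco, one_mul] at h4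
        exact orderOf_dvd_iff_pow_eq_one.mp h3
    have hiff := eqvgen_iff_of_pres key (hc g 1)
    have hg1 : g ^ m = 1 := hiff.mpr (one_pow m)
    have hd : p - 1 ∣ m := hog ▸ orderOf_dvd_iff_pow_eq_one.mpr hg1
    have hle := Nat.le_of_dvd hm0 hd
    have := hq.two_le
    nlinarith
  · intro h x y
    have hn0 : p - 1 ≠ 0 := by have := hp.two_le; omega
    have hdvd : p - 1 ∣ e ^ (p - 1) := dvd_pow_of_primes _ e (by omega) hn0 h
    have key : ∀ z : (ZMod p)ˣ,
        Relation.EqvGen (fun a b : (ZMod p)ˣ => b = a ^ e) z 1 := by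
      intro z
      have h1 : z ^ e ^ (p - 1) = 1 := by
        have ho : orderOf z ∣ p - 1 := hcard ▸ orderOf_dvd_card
        exact orderOf_dvd_iff_pow_eq_one.mp (ho.trans hdvd)
      have h2 := eqvgen_pow_iter e (p - 1) z
      rwa [h1] at h2
    exact Relation.EqvGen.trans _ _ _ (key x) (Relation.EqvGen.symm _ _ (key y))
end

section
/- Let p be an odd prime, q a prime, and n ≥ 1 an integer. The q^n-th power map modulo p is connected if and only if p = q^k + 1 for some integer k ≥ 1. -/
private lemma eqvGen_invariant {α : Type*} {r : α → α → Prop} {Q : α → Prop}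
    (h : ∀ a b, r a b → (Q a ↔ Q b)) {x y : α} (hxy : Relation.EqvGen r x y) :
    Q x ↔ Q y := by
  induction hxy with
  | rel a b hab => exact h a b hab
  | refl a => exact Iff.rfl
  | symm a b _ ih => exact ih.symm
  | trans a b c _ _ ih1 ih2 => exact ih1.trans ih2

private lemma eqvGen_chain {G : Type*} [Monoid G] (e : ℕ) (x : G) (t : ℕ) :
    Relation.EqvGen (fun a b : G => b = a ^ e) x (x ^ e ^ t) := by
  induction t with
  | zero => simpa using Relation.EqvGen.refl x
  | succ t ih =>
    refine ih.trans _ _ _ (Relation.EqvGen.rel _ _ ?_)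
    rw [← pow_mul, pow_succ]

/-- For an odd prime `p`, a prime `q`, and `n ≥ 1`, the `qⁿ`-th power map
modulo `p` is connected if and only if `p = q^k + 1` for some `k ≥ 1`. -/
theorem powConnected_prime_power_iff (p q n : ℕ) (hp : p.Prime) (hodd : Odd p)
    (hq : q.Prime) (hn : 1 ≤ n) :
    PowConnected p (q ^ n) ↔ ∃ k : ℕ, 1 ≤ k ∧ p = q ^ k + 1 := by
  haveI : Fact p.Prime := ⟨hp⟩
  have hp3 : 3 ≤ p := by
    rcases hodd with ⟨c, hc⟩
    have := hp.two_le
    omega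
  have hcard : Fintype.card (ZMod p)ˣ = p - 1 := by
    rw [ZMod.card_units_eq_totient, Nat.totient_prime hp]
  set m := p - 1 with hm
  have hm2 : 2 ≤ m := by omega
  constructor
  · intro hconn
    have hall : ∀ {r : ℕ}, r.Prime → r ∣ m → r = q := by
      intro r hr hrm
      by_contra hne
      -- invariant: `x ^ (m / r) = 1`
      have hinv : ∀ a b : (ZMod p)ˣ, (b = a ^ (q ^ n)) →
          ((a ^ (m / r) = 1) ↔ (b ^ (m / r) = 1)) := by
        rintro a b rfl
        constructor
        · intro ha
          rw [← pow_mul, mul_comm, pow_mul, ha, one_pow]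
        · intro hb
          rw [← pow_mul] at hb
          have hda : orderOf a ∣ q ^ n * (m / r) := orderOf_dvd_of_pow_eq_one hb
          have hdm : orderOf a ∣ m := by
            rw [← hcard]; exact orderOf_dvd_card
          have hmr : m = r * (m / r) := (Nat.mul_div_cancel' hrm).symm
          have hcop : Nat.Coprime r (q ^ n) :=
            ((Nat.coprime_primes hr hq).mpr hne).pow_right n
          have hgcd : Nat.gcd (r * (m / r)) (q ^ n * (m / r)) = m / r := by
            rw [Nat.gcd_mul_right, hcop, one_mul]
          have : orderOf a ∣ m / r := by
            rw [← hgcd]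
            exact Nat.dvd_gcd (hmr ▸ hdm) hda
          exact orderOf_dvd_iff_pow_eq_one.mp this
      obtain ⟨g, hg⟩ := IsCyclic.exists_generator (α := (ZMod p)ˣ)
      have hog : orderOf g = m := by
        rw [← hcard, ← Nat.card_eq_fintype_card]; exact orderOf_eq_card_of_forall_mem_zpowers hg
      have h1 : (1 : (ZMod p)ˣ) ^ (m / r) = 1 := one_pow _
      have hg1 : g ^ (m / r) = 1 :=
        (eqvGen_invariant hinv (hconn g 1)).mpr h1
      have : m ∣ m / r := by
        have h := orderOf_dvd_of_pow_eq_one hg1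
        rwa [hog] at h
      have hlt : m / r < m := Nat.div_lt_self (by omega) hr.one_lt
      have hpos : 0 < m / r := Nat.div_pos (Nat.le_of_dvd (by omega) hrm) hr.pos
      exact absurd (Nat.le_of_dvd hpos this) (by omega)
    have hmk : m = q ^ m.primeFactorsList.length :=
      Nat.eq_prime_pow_of_unique_prime_dvd (by omega) hall
    refine ⟨m.primeFactorsList.length, ?_, by omega⟩
    by_contra hk
    have : m.primeFactorsList.length = 0 := by omega
    rw [this, pow_zero] at hmk
    omega
  · rintro ⟨k, hk1, hpk⟩
    intro x y
    have hcard' : Fintype.card (ZMod p)ˣ = q ^ k := by rw [hcard]; omega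
    have hone : ∀ z : (ZMod p)ˣ, z ^ (q ^ n) ^ k = 1 := by
      intro z
      have hz : z ^ q ^ k = 1 := by rw [← hcard']; exact pow_card_eq_one
      have hdvd : q ^ k ∣ (q ^ n) ^ k := by
        rw [← pow_mul]
        exact pow_dvd_pow q (Nat.le_mul_of_pos_left k hn)
      obtain ⟨c, hc⟩ := hdvd
      rw [hc, pow_mul, hz, one_pow]
    have hx := eqvGen_chain (G := (ZMod p)ˣ) (q ^ n) x k
    have hy := eqvGen_chain (G := (ZMod p)ˣ) (q ^ n) y k
    rw [hone x] at hx
    rw [hone y] at hy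
    exact hx.trans _ _ _ (hy.symm _ _)
end

section
/- Let p be an odd prime. The squaring map modulo p (the case e = 2) is connected if and only if p = 2^k + 1 for some integer k ≥ 1, i.e. if and only if p is a Fermat prime. -/
/-- For an odd prime `p`, the squaring map modulo `p` is connected if and
only if `p = 2^k + 1` for some `k ≥ 1`, i.e., `p` is a Fermat prime. -/
theorem squaring_connected_iff_fermat (p : ℕ) (hp : p.Prime) (hodd : Odd p) :
    PowConnected p 2 ↔ ∃ k : ℕ, 1 ≤ k ∧ p = 2 ^ k + 1 := by
  haveI : Fact p.Prime := ⟨hp⟩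
  have hp2 : p ≠ 2 := by rintro rfl; exact (Nat.not_odd_iff_even.mpr even_two) hodd
  have hp3 : 3 ≤ p := by
    have := hp.two_le; omega
  set m := p - 1 with hm
  have hm2 : 2 ≤ m := by omega
  have hcard : Fintype.card (ZMod p)ˣ = m := ZMod.card_units p
  constructor
  · intro hcon
    by_contra hne
    push_neg at hne
    -- find odd prime q dividing m = p - 1
    set ν := m.factorization 2 with hν
    set c := m / 2 ^ ν with hc
    have hm0 : m ≠ 0 := by omega
    have hcpos : 0 < c := Nat.ordCompl_pos 2 hm0
    have hcdvd : c ∣ m := Nat.ordCompl_dvd m 2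
    have hcodd : ¬ 2 ∣ c := Nat.not_dvd_ordCompl Nat.prime_two hm0
    have hc1 : c ≠ 1 := by
      intro h1
      have hmpow : m = 2 ^ ν := by
        have h2 := Nat.ordProj_mul_ordCompl_eq_self m 2
        rw [← hν, ← hc, h1, mul_one] at h2
        exact h2.symm
      have hν1 : 1 ≤ ν := by
        by_contra h
        have : ν = 0 := by omega
        rw [this] at hmpow; omega
      exact hne ν hν1 (by omega)
    set q := c.minFac with hq
    have hqprime : q.Prime := Nat.minFac_prime hc1
    have hqdvd : q ∣ m := (Nat.minFac_dvd c).trans hcdvd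
    have hq2 : q ≠ 2 := by
      intro h; exact hcodd (h ▸ Nat.minFac_dvd c)
    set n := m / q with hn
    have hmn : n * q = m := Nat.div_mul_cancel hqdvd
    have hcop : Nat.gcd 2 q = 1 := (Nat.coprime_primes Nat.prime_two hqprime).mpr (Ne.symm hq2)
    have key : ∀ x : (ZMod p)ˣ, x ^ n = 1 ↔ (x ^ 2) ^ n = 1 := by
      intro x
      constructor
      · intro h
        rw [pow_right_comm, h, one_pow]
      · intro h
        have h1 : orderOf x ∣ 2 * n := by
          rw [orderOf_dvd_iff_pow_eq_one, pow_mul]; exact h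
        have h2 : orderOf x ∣ m := hcard ▸ orderOf_dvd_card
        have h3 : orderOf x ∣ n := by
          have := Nat.dvd_gcd h1 h2
          rwa [← hmn, mul_comm 2 n, Nat.gcd_mul_left, hcop, mul_one] at this
        exact orderOf_dvd_iff_pow_eq_one.mp h3
    have inv : ∀ x y : (ZMod p)ˣ,
        Relation.EqvGen (fun a b : (ZMod p)ˣ => b = a ^ 2) x y → (x ^ n = 1 ↔ y ^ n = 1) := by
      intro x y h
      induction h with
      | rel a b hab => rw [hab]; exact key a
      | refl a => exact Iff.rfl
      | symm a b _ ih => exact ih.symm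
      | trans a b c _ _ ih1 ih2 => exact ih1.trans ih2
    obtain ⟨g, hg⟩ := IsCyclic.exists_generator (α := (ZMod p)ˣ)
    have hog : orderOf g = m := by
      rw [orderOf_eq_card_of_forall_mem_zpowers hg, Nat.card_eq_fintype_card, hcard]
    have hgn : g ^ n = 1 := (inv g 1 (hcon g 1)).mpr (one_pow n)
    have hdvd : m ∣ n := by rw [← hog]; exact orderOf_dvd_iff_pow_eq_one.mpr hgn
    have hnpos : 0 < n := Nat.div_pos (Nat.le_of_dvd (by omega) hqdvd) hqprime.pos
    have hnlt : n < m := Nat.div_lt_self (by omega) hqprime.one_lt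
    exact absurd (Nat.le_of_dvd hnpos hdvd) (by omega)
  · rintro ⟨k, hk1, hk⟩ x y
    have hcard2 : Fintype.card (ZMod p)ˣ = 2 ^ k := by rw [hcard]; omega
    have h1 : ∀ z : (ZMod p)ˣ,
        Relation.EqvGen (fun a b : (ZMod p)ˣ => b = a ^ 2) z 1 := by
      intro z
      have step : ∀ j, Relation.EqvGen (fun a b : (ZMod p)ˣ => b = a ^ 2) z (z ^ 2 ^ j) := by
        intro j
        induction j with
        | zero => simpa using Relation.EqvGen.refl z
        | succ j ih =>
          refine Relation.EqvGen.trans _ _ _ ih (Relation.EqvGen.rel _ _ ?_)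
          rw [pow_succ, pow_mul]
      have hz1 : z ^ 2 ^ k = 1 := by rw [← hcard2]; exact pow_card_eq_one
      have := step k
      rwa [hz1] at this
    exact Relation.EqvGen.trans _ _ _ (h1 x) ((h1 y).symm _ _)
end

section
/- The first appearance of 3 is in row 104: 3 ∈ R₁₀₄, and 3 ∉ R_i for every integer i with 1 ≤ i < 104. -/
/-- Lookup for the potential function on residue class `1 mod 5`. -/
def t1 (x : ℕ) : ℕ :=
  if x ≤ 16 then (if 1 ≤ x then 10 - 2 * ((x - 1) / 5) else 103) else if x ≤ 36 then (if 21 ≤ x then 15 - 2 * ((x - 21) / 5) else 103) else if x ≤ 81 then (if 41 ≤ x then 18 - 2 * ((x - 41) / 5) else 103) else if x ≤ 121 then (if 86 ≤ x then 21 - 2 * ((x - 86) / 5) else 103) else if x ≤ 256 then (if 126 ≤ x then 57 - 2 * ((x - 126) / 5) else 103) else if x ≤ 441 then (if 261 ≤ x then 88 - 2 * ((x - 261) / 5) else 103) else if x ≤ 676 then (if 456 ≤ x then 102 - 2 * ((x - 456) / 5) else 103) else if x ≤ 961 then (if 736 ≤ x then 102 - 2 * ((x - 736) / 5) else 103) else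 if x ≤ 1296 then (if 1066 ≤ x then 102 - 2 * ((x - 1066) / 5) else 103) else if x ≤ 1681 then (if 1476 ≤ x then 101 - 2 * ((x - 1476) / 5) else 103) else if x ≤ 2116 then (if 1906 ≤ x then 101 - 2 * ((x - 1906) / 5) else 103) else if x ≤ 2601 then (if 2386 ≤ x then 101 - 2 * ((x - 2386) / 5) else 103) else if x ≤ 3136 then (if 2916 ≤ x then 101 - 2 * ((x - 2916) / 5) else 103) else if x ≤ 3721 then (if 3496 ≤ x then 101 - 2 * ((x - 3496) / 5) else 103) else if x ≤ 4356 then (if 4126 ≤ x then 101 - 2 * ((x - 4126) / 5) else 103) else if x ≤ 5041 then (if 4806 ≤ x then 101 - 2 * ((x - 4806) / 5) else 103) else if x ≤ 5776 then (if 5536 ≤ x then 101 - 2 * ((x - 5536) / 5) else 103) else if x ≤ 6561 then (if 6316 ≤ x then 101 - 2 * ((x - 6316) / 5) else 103) else if x ≤ 7396 then (if 7196 ≤ x then 102 - 2 * ((x - 7196) / 5) else 103) else if x ≤ 8281 then (if 8076 ≤ x then 102 - 2 * ((x - 8076) / 5) else 103) else if x ≤ 9216 then (if 9006 ≤ x then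 102 - 2 * ((x - 9006) / 5) else 103) else if x ≤ 10201 then (if 9986 ≤ x then 102 - 2 * ((x - 9986) / 5) else 103) else if x ≤ 11236 then (if 11016 ≤ x then 102 - 2 * ((x - 11016) / 5) else 103) else if x ≤ 12321 then (if 12096 ≤ x then 102 - 2 * ((x - 12096) / 5) else 103) else if x ≤ 13456 then (if 13226 ≤ x then 102 - 2 * ((x - 13226) / 5) else 103) else if x ≤ 14641 then (if 14406 ≤ x then 102 - 2 * ((x - 14406) / 5) else 103) else if x ≤ 15876 then (if 15766 ≤ x then 102 - 2 * ((x - 15766) / 5) else 103) else if x ≤ 17161 then (if 17046 ≤ x then 102 - 2 * ((x - 17046) / 5) else 103) else if x ≤ 18496 then (if 18376 ≤ x then 102 - 2 * ((x - 18376) / 5) else 103) else if x ≤ 19881 then (if 19756 ≤ x then 102 - 2 * ((x - 19756) / 5) else 103) else 103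

/-- Lookup for the potential function on residue class `4 mod 5`. -/
def t4 (x : ℕ) : ℕ :=
  if x ≤ 9 then (if 4 ≤ x then 3 - 2 * ((x - 4) / 5) else 103) else if x ≤ 14 then (if 14 ≤ x then 49 - 2 * ((x - 14) / 5) else 103) else if x ≤ 19 then (if 19 ≤ x then 55 - 2 * ((x - 19) / 5) else 103) else if x ≤ 24 then (if 24 ≤ x then 61 - 2 * ((x - 24) / 5) else 103) else if x ≤ 29 then (if 29 ≤ x then 67 - 2 * ((x - 29) / 5) else 103) else if x ≤ 34 then (if 34 ≤ x then 84 - 2 * ((x - 34) / 5) else 103) else if x ≤ 39 then (if 39 ≤ x then 90 - 2 * ((x - 39) / 5) else 103) else if x ≤ 44 then (if 44 ≤ x then 96 - 2 * ((x - 44) / 5) else 103) else if x ≤ 49 then (if 49 ≤ x then 102 - 2 * ((x - 49) / 5) else 103) else 103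

/-- The table of the potential function on `[0, 20000]`. -/
def table (x : ℕ) : ℕ :=
  min 103 <|
    if x = 3 then 0
    else if x % 5 = 1 then t1 x
    else if x % 5 = 4 then t4 x
    else 103

lemma table_le (x : ℕ) : table x ≤ 103 := Nat.min_le_left _ _

lemma t4_103 {x : ℕ} (h : 50 ≤ x) : t4 x = 103 := by
  unfold t4
  rw [if_neg (show ¬x ≤ 9 by omega), if_neg (show ¬x ≤ 14 by omega), if_neg (show ¬x ≤ 19 by omega), if_neg (show ¬x ≤ 24 by omega), if_neg (show ¬x ≤ 29 by omega), if_neg (show ¬x ≤ 34 by omega), if_neg (show ¬x ≤ 39 by omega), if_neg (show ¬x ≤ 44 by omega), if_neg (show ¬x ≤ 49 by omega)]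

lemma tableA {x : ℕ} (h1 : x ≠ 3) (h2 : x % 5 ≠ 1) (h3 : x % 5 ≠ 4) :
    table x = 103 := by
  unfold table
  rw [if_neg h1, if_neg h2, if_neg h3]
  rfl

lemma tableC {x : ℕ} (h1 : x % 5 = 4) (h2 : 50 ≤ x) : table x = 103 := by
  unfold table
  rw [if_neg (show x ≠ 3 by omega), if_neg (show ¬x % 5 = 1 by omega),
    if_pos h1, t4_103 h2]
  rfl

-- Finite verifications (pure table computations).
set_option maxRecDepth 10000 in
set_option maxHeartbeats 4000000 in
lemma c1small : ∀ a < 8, ∀ b < 500,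
    table (5*(500*a+b)+1) ≤ min 103 (table (5*(500*a+b)+6) + 1) + 1 := by decide

set_option maxRecDepth 2000 in
lemma c4small : ∀ a < 10, table (5*a+4) ≤ min 103 (table (5*a+9) + 1) + 1 := by decide

set_option maxRecDepth 2000 in
set_option maxHeartbeats 1000000 in
lemma check_small_c : ∀ x < 137, table x ≤ table ((x+5)^2) + 1 := by decide

set_option maxRecDepth 2000 in
set_option maxHeartbeats 1000000 in
lemma check_small_d : ∀ x < 142, table (x^2) ≤ table x + 1 := by decide

lemma table2 : table 2 = 103 := by decide
lemma table3 : table 3 = 0 := by decide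
lemma table142 : table 142 = 103 := by decide

/-- The combined check on `[0, 19995]`. -/
lemma check_mid_c : ∀ x ≤ 19995, table x ≤ min 103 (table (x+5) + 1) + 1 := by
  intro x hx
  by_cases h1 : x % 5 = 1
  · have h := c1small ((x-1)/5/500) (by omega) ((x-1)/5%500) (by omega)
    have e1 : 5*(500*((x-1)/5/500)+((x-1)/5%500))+1 = x := by omega
    have e2 : 5*(500*((x-1)/5/500)+((x-1)/5%500))+6 = x+5 := by omega
    rw [e1, e2] at h
    exact h
  · by_cases h4 : x % 5 = 4
    · rcases le_or_gt x 49 with hs | hs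
      · have h := c4small ((x-4)/5) (by omega)
        have e1 : 5*((x-4)/5)+4 = x := by omega
        have e2 : 5*((x-4)/5)+9 = x+5 := by omega
        rw [e1, e2] at h
        exact h
      · rw [tableC (show (x+5) % 5 = 4 by omega) (by omega)]
        have := table_le x
        omega
    · rw [tableA (show x+5 ≠ 3 by omega) (show ¬(x+5) % 5 = 1 by omega)
        (show ¬(x+5) % 5 = 4 by omega)]
      have := table_le x
      omega

/-- `tval x` is the least `t` with `t * t ≥ x`. -/
def tval (x : ℕ) : ℕ :=
  if Nat.sqrt x * Nat.sqrt x = x then Nat.sqrt x else Nat.sqrt x + 1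

lemma tval_lt {x : ℕ} (h : 20000 < x) : tval x < x := by
  have hs : Nat.sqrt x * Nat.sqrt x ≤ x := Nat.sqrt_le x
  have h141 : 141 ≤ Nat.sqrt x := Nat.le_sqrt.mpr (by omega)
  have hm : 141 * Nat.sqrt x ≤ Nat.sqrt x * Nat.sqrt x :=
    Nat.mul_le_mul_right _ h141
  unfold tval
  split <;> omega

/-- The potential function: a lower bound for the number of steps needed to
reach `3` from `x` under the moves `x ↦ (x+5)^2` and `x ↦ √x`. -/
def L (x : ℕ) : ℕ :=
  if h : x ≤ 20000 then table x
  else if tval x * tval x ≤ x + 250 ∧ (tval x * tval x - x) % 5 = 0 then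
    min 103 (L (tval x) + 1 + 2 * ((tval x * tval x - x) / 5))
  else 103
termination_by x
decreasing_by exact tval_lt (by omega)

lemma L_small {x : ℕ} (h : x ≤ 20000) : L x = table x := by
  rw [L.eq_def, dif_pos h]

lemma L_big {x : ℕ} (h : 20000 < x) :
    L x = if tval x * tval x ≤ x + 250 ∧ (tval x * tval x - x) % 5 = 0 then
      min 103 (L (tval x) + 1 + 2 * ((tval x * tval x - x) / 5))
    else 103 := by
  rw [L.eq_def, dif_neg (by omega)]

lemma L_le (x : ℕ) : L x ≤ 103 := by
  rcases le_or_gt x 20000 with h | h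
  · rw [L_small h]; exact table_le x
  · rw [L_big h]
    split
    · exact Nat.min_le_left _ _
    · exact le_refl _

lemma sqrt_unique {a s : ℕ} (h1 : s * s ≤ a) (h2 : a < (s+1) * (s+1)) :
    Nat.sqrt a = s := by
  have u1 : s ≤ Nat.sqrt a := Nat.le_sqrt.mpr h1
  have u2 : Nat.sqrt a < s + 1 := Nat.sqrt_lt.mpr h2
  omega

lemma L_sq {y : ℕ} (h : 20000 < y * y) : L (y * y) = min 103 (L y + 1) := by
  have ht : tval (y * y) = y := by
    unfold tval
    rw [Nat.sqrt_eq]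
    simp
  rw [L_big h, ht, if_pos ⟨by omega, by simp⟩]
  simp

/-- Main structural fact: the potential drops by at most 2 when passing from
`x` to `x + 5`, for large `x`. -/
lemma claim {x : ℕ} (h : 20000 < x) : L x ≤ L (x + 5) + 2 := by
  have hss : Nat.sqrt x * Nat.sqrt x ≤ x := Nat.sqrt_le x
  have hlt : x < (Nat.sqrt x + 1) * (Nat.sqrt x + 1) := Nat.lt_succ_sqrt x
  have h141 : 141 ≤ Nat.sqrt x := Nat.le_sqrt.mpr (by omega)
  set s := Nat.sqrt x with hs_def
  have ex1 : (s+1) * (s+1) = s*s + 2*s + 1 := by ring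
  have ex2 : (s+2) * (s+2) = s*s + 4*s + 4 := by ring
  have ex2' : (s+1+1) * (s+1+1) = s*s + 4*s + 4 := by ring
  by_cases hsq : s * s = x
  · -- x is a perfect square; then L (x+5) = 103
    have hsqrt5 : Nat.sqrt (x+5) = s := sqrt_unique (by omega) (by omega)
    have htv5 : tval (x+5) = s + 1 := by
      unfold tval
      rw [hsqrt5, if_neg (by omega)]
    have hL5 : L (x + 5) = 103 := by
      rw [L_big (by omega), htv5,
        if_neg (show ¬((s+1)*(s+1) ≤ x+5+250 ∧ ((s+1)*(s+1) - (x+5)) % 5 = 0)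
          from fun hc => by omega)]
    have := L_le x
    omega
  · -- x is not a perfect square
    have htv : tval x = s + 1 := by
      unfold tval
      rw [← hs_def, if_neg hsq]
    rcases le_or_gt ((s+1) * (s+1)) (x + 5) with hA | hB
    · -- the next square is within [x+1, x+5]
      have hsqrt5 : Nat.sqrt (x+5) = s + 1 := sqrt_unique hA (by omega)
      rcases eq_or_lt_of_le hA with hE5 | hE4
      · -- (s+1)^2 = x + 5
        have hL5 : L (x+5) = min 103 (L (s+1) + 1) := by
          rw [← hE5]
          exact L_sq (by omega)
        have hLx : L x = min 103 (L (s+1) + 3) := by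
          rw [L_big h, htv, if_pos ⟨by omega, by omega⟩]
          have e1 : (s+1)*(s+1) - x = 5 := by omega
          rw [e1]
        rw [hLx, hL5]
        omega
      · -- (s+1)^2 ≤ x + 4
        have hLx : L x = 103 := by
          rw [L_big h, htv,
            if_neg (show ¬((s+1)*(s+1) ≤ x+250 ∧ ((s+1)*(s+1) - x) % 5 = 0)
              from fun hc => by omega)]
        have htv5 : tval (x+5) = s + 2 := by
          unfold tval
          rw [hsqrt5, if_neg (by omega)]
        have hL5 : L (x+5) = 103 := by
          rw [L_big (by omega), htv5]
          split
          · next hcond =>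
              rcases hcond with ⟨c1, -⟩
              omega
          · rfl
        omega
    · -- the next square is at least x + 6
      have hsqrt5 : Nat.sqrt (x+5) = s := sqrt_unique (by omega) hB
      have htv5 : tval (x+5) = s + 1 := by
        unfold tval
        rw [hsqrt5, if_neg (by omega)]
      by_cases m : ((s+1)*(s+1) - x) % 5 = 0
      · rcases le_or_gt ((s+1)*(s+1)) (x + 250) with hc | hc
        · have hLx : L x = min 103 (L (s+1) + 1 + 2 * (((s+1)*(s+1) - x) / 5)) := by
            rw [L_big h, htv, if_pos ⟨hc, m⟩]
          have hL5 : L (x+5) =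
              min 103 (L (s+1) + 1 + 2 * (((s+1)*(s+1) - (x+5)) / 5)) := by
            rw [L_big (by omega), htv5, if_pos ⟨by omega, by omega⟩]
          rw [hLx, hL5]
          omega
        · have hLx : L x = 103 := by
            rw [L_big h, htv,
              if_neg (show ¬((s+1)*(s+1) ≤ x+250 ∧ ((s+1)*(s+1) - x) % 5 = 0)
                from fun hc' => by omega)]
          rcases le_or_gt ((s+1)*(s+1)) (x + 255) with hc' | hc'
          · have hL5 : L (x+5) =
                min 103 (L (s+1) + 1 + 2 * (((s+1)*(s+1) - (x+5)) / 5)) := by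
              rw [L_big (by omega), htv5, if_pos ⟨by omega, by omega⟩]
            rw [hLx, hL5]
            omega
          · have hL5 : L (x+5) = 103 := by
              rw [L_big (by omega), htv5,
                if_neg (show ¬((s+1)*(s+1) ≤ x+5+250 ∧ ((s+1)*(s+1) - (x+5)) % 5 = 0)
                  from fun hc'' => by omega)]
            omega
      · have hLx : L x = 103 := by
          rw [L_big h, htv,
            if_neg (show ¬((s+1)*(s+1) ≤ x+250 ∧ ((s+1)*(s+1) - x) % 5 = 0)
              from fun hc => m hc.2)]
        have hL5 : L (x+5) = 103 := by
          rw [L_big (by omega), htv5,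
            if_neg (show ¬((s+1)*(s+1) ≤ x+5+250 ∧ ((s+1)*(s+1) - (x+5)) % 5 = 0)
              from fun hc => by omega)]
        omega

lemma L_bnd {z : ℕ} (h1 : 20000 < z) (h2 : z ≤ 20005) : L z = 103 := by
  have hsqrt : Nat.sqrt z = 141 := sqrt_unique (by omega) (by omega)
  have htv : tval z = 142 := by
    unfold tval
    rw [hsqrt, if_neg (by omega)]
  have hL142 : L 142 = 103 := by
    rw [L_small (by omega)]
    exact table142
  rw [L_big h1, htv]
  by_cases m : (142 * 142 - z) % 5 = 0
  · rw [if_pos ⟨by omega, m⟩, hL142]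
    omega
  · rw [if_neg (show ¬(142*142 ≤ z + 250 ∧ (142*142 - z) % 5 = 0)
      from fun hc => m hc.2)]

/-- Condition (c): the potential drops by at most one along `x ↦ (x+5)^2`. -/
lemma lemC (y : ℕ) : L y ≤ L ((y+5)^2) + 1 := by
  rcases le_or_gt y 136 with h136 | h136
  · have hsm : (y+5)^2 ≤ 20000 := by
      have : (y+5)*(y+5) ≤ 141*141 := Nat.mul_le_mul (by omega) (by omega)
      rw [pow_two]
      omega
    rw [L_small (by omega), L_small hsm]
    exact check_small_c y (by omega)
  · have hbig : 20000 < (y+5)*(y+5) := by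
      have : 142*142 ≤ (y+5)*(y+5) := Nat.mul_le_mul (by omega) (by omega)
      omega
    have hmain : L ((y+5)^2) = min 103 (L (y+5) + 1) := by
      rw [pow_two]
      exact L_sq hbig
    rcases le_or_gt y 19995 with h19995 | h19995
    · rw [hmain, L_small (by omega), L_small (by omega)]
      exact check_mid_c y (by omega)
    · rcases le_or_gt y 20000 with h20000 | h20000
      · rw [hmain, L_bnd (z := y+5) (by omega) (by omega), L_small (by omega)]
        have := table_le y
        omega
      · have hclaim := claim h20000
        have hle := L_le y
        rw [hmain]
        omega

/-- Condition (d): the potential drops by at most one along `x^2 ↦ x`. -/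
lemma lemD (x : ℕ) : L (x^2) ≤ L x + 1 := by
  rcases le_or_gt x 141 with h | h
  · have hsm : x^2 ≤ 20000 := by
      have : x*x ≤ 141*141 := Nat.mul_le_mul h h
      rw [pow_two]
      omega
    rw [L_small hsm, L_small (by omega)]
    exact check_small_d x (by omega)
  · have hbig : 20000 < x * x := by
      have : 142*142 ≤ x*x := Nat.mul_le_mul (by omega) (by omega)
      omega
    rw [pow_two, L_sq hbig]
    omega

/-- Key invariant: every element of row `i` has potential at least `104 - i`. -/
lemma main_inv : ∀ i, ∀ x ∈ R i, 104 ≤ L x + i := by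
  intro i
  induction i using Nat.strong_induction_on with
  | _ i ih =>
    obtain _ | _ | k := i
    · intro x hx
      exact absurd hx (fun h => h)
    · intro x hx
      have hx2 : x = 2 := hx
      subst hx2
      have hL2 : L 2 = 103 := by
        rw [L_small (by omega)]
        exact table2
      omega
    · intro x hx
      rcases hx with ⟨y, hy, rfl⟩ | hmem
      · have h1 := ih (k+1) (by omega) y hy
        have h2 := lemC y
        show 104 ≤ L ((y+5)^2) + (k+2)
        omega
      · have h1 := ih (k+1) (by omega) (x^2) hmem
        have h2 := lemD x
        omega

-- Membership helper lemmas for the positive part.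
lemma memA {k x : ℕ} (h : x ∈ R (k+1)) : (x+5)^2 ∈ R (k+2) :=
  Set.mem_union_left _ ⟨x, h, rfl⟩

lemma memB {k y : ℕ} (h : y^2 ∈ R (k+1)) : y ∈ R (k+2) :=
  Set.mem_union_right _ h

lemma step5 {k x : ℕ} (h : x ∈ R (k+1)) : x + 5 ∈ R (k+3) :=
  memB (memA h)

lemma chain5 : ∀ (m x k : ℕ), x ∈ R (k+1) → x + 5*m ∈ R (k+1+2*m) := by
  intro m
  induction m with
  | zero =>
    intro x k h
    simpa using h
  | succ n ih =>
    intro x k h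
    have h2 := step5 (k := k + 2*n) (by
      have hh := ih x k h
      have e : k + 1 + 2*n = (k + 2*n) + 1 := by omega
      rwa [e] at hh)
    have e1 : x + 5*n + 5 = x + 5*(n+1) := by omega
    have e2 : (k + 2*n) + 3 = k + 1 + 2*(n+1) := by omega
    rwa [e1, e2] at h2

lemma three_in_R104 : 3 ∈ R 104 := by
  have h1 : (2:ℕ) ∈ R 1 := rfl
  have h2 : (49:ℕ) ∈ R 2 := by
    have h := memA (k := 0) h1
    norm_num at h
    exact h
  have h3 : (2916:ℕ) ∈ R 3 := by
    have h := memA (k := 1) h2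
    norm_num at h
    exact h
  have h4 : (3136:ℕ) ∈ R 91 := by
    have h := chain5 44 2916 2 h3
    norm_num at h
    exact h
  have h5 : (56:ℕ) ∈ R 92 := memB (k := 90) (by norm_num; exact h4)
  have h6 : (3721:ℕ) ∈ R 93 := by
    have h := memA (k := 91) h5
    norm_num at h
    exact h
  have h7 : (61:ℕ) ∈ R 94 := memB (k := 92) (by norm_num; exact h6)
  have h8 : (76:ℕ) ∈ R 100 := by
    have h := chain5 3 61 93 h7
    norm_num at h
    exact h
  have h9 : (6561:ℕ) ∈ R 101 := by
    have h := memA (k := 99) h8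
    norm_num at h
    exact h
  have h10 : (81:ℕ) ∈ R 102 := memB (k := 100) (by norm_num; exact h9)
  have h11 : (9:ℕ) ∈ R 103 := memB (k := 101) (by norm_num; exact h10)
  exact memB (k := 102) (by norm_num; exact h11)

/-- The first appearance of `3` is in row `104`: `3 ∈ R 104` and `3 ∉ R i`
for all `1 ≤ i < 104`. -/
theorem three_first_appears_in_row_104 :
    3 ∈ R 104 ∧ ∀ i : ℕ, 1 ≤ i → i < 104 → 3 ∉ R i := by
  constructor
  · exact three_in_R104
  · intro i h1 h2 h3
    have hinv := main_inv i 3 h3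
    have hL3 : L 3 = 0 := by
      rw [L_small (by omega)]
      exact table3
    omega
end
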